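/- arXiv:2403.20220 — 7 statements merged into one kernel-verified Lean document; each statement's English description precedes it below -/
import Mathlib

section
/- Let A ⊆ B be a ring extension where A is a local ring, and let 𝔣 = (f₁,…,fₙ)A be an A-submodule of B that is B-invertible (i.e., there exists an A-submodule 𝔟 of B with 𝔣𝔟 = A). Then 𝔣 = fᵢA for some index i. -/
theorem stmt0 {A B : Type*} [CommRing A] [CommRing B] [Algebra A B] [IsLocalRing A]
    (hinj : Function.Injective (algebraMap A B))
    {n : ℕ} (f : Fin n → B)
    (hinv : ∃ b : Submodule A B, Submodule.span A (Set.range f) * b = 1) :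
    ∃ i : Fin n, Submodule.span A (Set.range f) = Submodule.span A {f i} := by
  obtain ⟨b, hb⟩ := hinv
  have h1 : (1 : B) ∈ Submodule.span A (Set.range f) * b := by
    rw [hb]; exact Submodule.one_le.mp le_rfl
  have hc : ∃ c : Fin n → B, (∀ j, c j ∈ b) ∧ (1 : B) = ∑ j, f j * c j := by
    refine Submodule.mul_induction_on h1 ?_ ?_
    · intro m hm y hy
      obtain ⟨a, ha⟩ := (Submodule.mem_span_range_iff_exists_fun A).mp hm
      refine ⟨fun j => a j • y, fun j => Submodule.smul_mem _ _ hy, ?_⟩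
      rw [← ha, Finset.sum_mul]
      exact Finset.sum_congr rfl fun j _ => by rw [smul_mul_assoc, mul_smul_comm]
    · rintro x y ⟨c, hcb, hx⟩ ⟨c', hcb', hy⟩
      refine ⟨fun j => c j + c' j, fun j => Submodule.add_mem _ (hcb j) (hcb' j), ?_⟩
      rw [hx, hy, ← Finset.sum_add_distrib]
      exact Finset.sum_congr rfl fun j _ => by ring
  obtain ⟨c, hcb, hsum⟩ := hc
  have hmem : ∀ j k : Fin n, f j * c k ∈ (1 : Submodule A B) := by
    intro j k
    rw [← hb]
    exact Submodule.mul_mem_mul (Submodule.subset_span ⟨j, rfl⟩) (hcb k)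
  have ha : ∀ j k : Fin n, ∃ a : A, algebraMap A B a = f j * c k := by
    intro j k
    obtain ⟨a, ha⟩ := (Submodule.mem_one).mp (hmem j k)
    exact ⟨a, ha⟩
  choose a ha using ha
  have hsumA : (∑ j, a j j) = 1 := by
    apply hinj
    rw [map_sum, map_one]
    simp_rw [ha]
    exact hsum.symm
  have hunit : ∃ i : Fin n, IsUnit (a i i) := by
    by_contra h
    push_neg at h
    have : (1 : A) ∈ IsLocalRing.maximalIdeal A := by
      rw [← hsumA]
      exact Ideal.sum_mem _ fun j _ => (IsLocalRing.mem_maximalIdeal _).mpr (h j)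
    exact (IsLocalRing.maximalIdeal.isMaximal A).ne_top (Ideal.eq_top_iff_one _ |>.mpr this)
  obtain ⟨i, hi⟩ := hunit
  obtain ⟨u, hu⟩ := hi
  refine ⟨i, le_antisymm ?_ (Submodule.span_mono (Set.singleton_subset_iff.mpr ⟨i, rfl⟩))⟩
  rw [Submodule.span_le]
  rintro _ ⟨j, rfl⟩
  rw [SetLike.mem_coe, Submodule.mem_span_singleton]
  refine ⟨a j i * ↑u⁻¹, ?_⟩
  have key : algebraMap A B (a j i) * f i = f j * algebraMap A B (a i i) := by
    rw [ha j i, ha i i]; ring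
  rw [Algebra.smul_def, map_mul, mul_comm (algebraMap A B (a j i)), mul_assoc, key, ← hu,
    mul_comm (f j), ← mul_assoc, ← map_mul, Units.inv_mul, map_one, one_mul]
end

section
/- Let A ⊆ B be a ring extension with A local, and suppose every finitely generated ideal of A that is B-regular is B-invertible. Then the set 𝔭 := {a ∈ A : a is not invertible in B} is a prime ideal of A. -/
open Pointwise

lemma aux_mem_smul {A B : Type*} [CommRing A] [CommRing B] [Algebra A B]
    (x : B) (p : Submodule A B) (u : B) (h : u ∈ x • p) : ∃ v ∈ p, x * v = u := by
  have : u ∈ x • (p : Set B) := by rwa [← Submodule.coe_pointwise_smul]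
  obtain ⟨v, hv, hvu⟩ := this
  exact ⟨v, hv, hvu⟩

lemma aux_key {A B : Type*} [CommRing A] [CommRing B] [Algebra A B] [IsLocalRing A]
    (hinj : Function.Injective (algebraMap A B))
    (h : ∀ I : Ideal A, I.FG → Ideal.map (algebraMap A B) I = ⊤ →
      ∃ J : Submodule A B, Submodule.map (Algebra.linearMap A B) I * J = 1)
    {x y : A} (hx : ¬ IsUnit (algebraMap A B x)) (hy : ¬ IsUnit (algebraMap A B y)) :
    ¬ IsUnit (algebraMap A B (x + y)) := by
  intro hu
  set I : Ideal A := Ideal.span {x, y} with hI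
  have hfg : I.FG := Submodule.fg_span ((Set.finite_singleton y).insert x)
  have hmem : x + y ∈ I :=
    Ideal.add_mem _ (Ideal.subset_span (by simp)) (Ideal.subset_span (by simp))
  have htop : Ideal.map (algebraMap A B) I = ⊤ :=
    Ideal.eq_top_of_isUnit_mem _ (Ideal.mem_map_of_mem _ hmem) hu
  obtain ⟨J, hJ⟩ := h I hfg htop
  set M : Submodule A B := Submodule.map (Algebra.linearMap A B) I with hM
  have hMspan : M = Submodule.span A {algebraMap A B x, algebraMap A B y} := by
    rw [hM, hI, Ideal.span, Submodule.map_span]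
    congr 1
    simp [Set.image_insert_eq]
  have hone : (1 : B) ∈ M * J := by
    rw [hJ, Submodule.one_eq_span]
    exact Submodule.subset_span rfl
  have hsplit : M * J = algebraMap A B x • J ⊔ algebraMap A B y • J := by
    rw [hMspan, show ({algebraMap A B x, algebraMap A B y} : Set B) =
      {algebraMap A B x} ∪ {algebraMap A B y} by rw [Set.singleton_union], Submodule.span_union,
      Submodule.sup_mul, Submodule.span_singleton_mul, Submodule.span_singleton_mul]
  rw [hsplit] at hone
  obtain ⟨u, hu1, v, hv1, huv⟩ := Submodule.mem_sup.mp hone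
  obtain ⟨j₁, hj₁, hxj₁⟩ := aux_mem_smul _ _ _ hu1
  obtain ⟨j₂, hj₂, hyj₂⟩ := aux_mem_smul _ _ _ hv1
  have hxM : algebraMap A B x ∈ M := by
    rw [hMspan]; exact Submodule.subset_span (by simp)
  have hyM : algebraMap A B y ∈ M := by
    rw [hMspan]; exact Submodule.subset_span (by simp)
  have huA : u ∈ (1 : Submodule A B) := by
    rw [← hJ, ← hxj₁]; exact Submodule.mul_mem_mul hxM hj₁
  have hvA : v ∈ (1 : Submodule A B) := by
    rw [← hJ, ← hyj₂]; exact Submodule.mul_mem_mul hyM hj₂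
  rw [Submodule.one_eq_span] at huA hvA
  obtain ⟨a, ha⟩ := Submodule.mem_span_singleton.mp huA
  obtain ⟨b, hb⟩ := Submodule.mem_span_singleton.mp hvA
  have ha' : algebraMap A B a = u := by rw [← ha]; simp [Algebra.smul_def]
  have hb' : algebraMap A B b = v := by rw [← hb]; simp [Algebra.smul_def]
  have hab : a + b = 1 := by
    apply hinj
    rw [map_add, map_one, ha', hb', huv]
  rcases IsLocalRing.isUnit_or_isUnit_of_add_one hab with hA | hB
  · exact hx (isUnit_of_mul_isUnit_left (x := algebraMap A B x) (y := j₁)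
      (by rw [hxj₁, ← ha']; exact hA.map _))
  · exact hy (isUnit_of_mul_isUnit_left (x := algebraMap A B y) (y := j₂)
      (by rw [hyj₂, ← hb']; exact hB.map _))

theorem stmt5 {A B : Type*} [CommRing A] [CommRing B] [Algebra A B] [IsLocalRing A]
    (hinj : Function.Injective (algebraMap A B))
    (h : ∀ I : Ideal A, I.FG → Ideal.map (algebraMap A B) I = ⊤ →
      ∃ J : Submodule A B, Submodule.map (Algebra.linearMap A B) I * J = 1) :
    ∃ p : Ideal A, p.IsPrime ∧ ∀ x : A, x ∈ p ↔ ¬ IsUnit (algebraMap A B x) := by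
  haveI : Nontrivial B := hinj.nontrivial
  refine ⟨{ carrier := {x | ¬ IsUnit (algebraMap A B x)}
            add_mem' := fun hx hy => aux_key hinj h hx hy
            zero_mem' := by simp
            smul_mem' := by
              intro c x hx hcx
              exact hx (isUnit_of_mul_isUnit_left (x := algebraMap A B x)
                (y := algebraMap A B c) (by rw [mul_comm, ← map_mul]; simpa using hcx)) },
    ?_, fun x => Iff.rfl⟩
  constructor
  · intro htop
    have h1 : (1 : A) ∈ (⊤ : Ideal A) := Submodule.mem_top
    rw [← htop] at h1
    exact h1 (by simp)
  · intro x y hxy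
    by_contra hc
    push_neg at hc
    have hx' : IsUnit (algebraMap A B x) := not_not.mp hc.1
    have hy' : IsUnit (algebraMap A B y) := not_not.mp hc.2
    exact hxy (by rw [map_mul]; exact hx'.mul hy')
end

section
/- If A is a local Prüfer ring, then the set Z(A) of zero-divisors of A is a prime ideal of A. -/
/-- A Prüfer ring: every finitely generated regular ideal is invertible
(as a submodule of the total ring of fractions). -/
def IsPruferRing (R : Type*) [CommRing R] : Prop :=
  ∀ I : Ideal R, I.FG → (∃ r ∈ I, r ∈ nonZeroDivisors R) →
    ∃ J : Submodule R (FractionRing R),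
      Submodule.map (Algebra.linearMap R (FractionRing R)) I * J = 1

/-!
If `a` and `b` are zero-divisors of a local Prüfer ring but `a + b` is not, the ideal `(a, b)` is
invertible: `1 = a j + b k` with `a j, b k ∈ A` for some `j, k` in its inverse. As `A` is local,
one of `a j`, `b k` is a unit of `A`, so `a` or `b` becomes a unit in the total ring of fractions
and is therefore a non-zero-divisor after all. Thus the zero-divisors are closed under addition,
and then they form a prime ideal in any commutative ring.
-/

open scoped nonZeroDivisors

def zeroDivisorsIdeal (R : Type*) [CommRing R] [Nontrivial R]
    (hadd : ∀ {a b : R}, a ∉ R⁰ → b ∉ R⁰ → a + b ∉ R⁰) : Ideal R where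
  carrier := {a | a ∉ R⁰}
  zero_mem' := zero_notMem_nonZeroDivisors
  add_mem' := hadd
  smul_mem' _ _ hx hrx := hx (mul_mem_nonZeroDivisors.mp hrx).2

theorem zeroDivisorsIdeal_isPrime {R : Type*} [CommRing R] [Nontrivial R]
    (hadd : ∀ {a b : R}, a ∉ R⁰ → b ∉ R⁰ → a + b ∉ R⁰) : (zeroDivisorsIdeal R hadd).IsPrime :=
  Ideal.isPrime_iff.mpr
    ⟨(Ideal.ne_top_iff_one _).mpr (not_not.mpr (one_mem _)),
      fun hxy ↦ not_and_or.mp (mt mul_mem_nonZeroDivisors.mpr hxy)⟩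

theorem IsLocalRing.isUnit_or_isUnit_algebraMap_of_map_span_pair_mul_eq_one
    {A K : Type*} [CommRing A] [IsLocalRing A] [CommRing K] [Algebra A K]
    (hinj : Function.Injective (algebraMap A K)) {a b : A} {J : Submodule A K}
    (hJ : Submodule.map (Algebra.linearMap A K) (Ideal.span {a, b}) * J = 1) :
    IsUnit (algebraMap A K a) ∨ IsUnit (algebraMap A K b) := by
  have hspan : Submodule.map (Algebra.linearMap A K) (Ideal.span {a, b}) =
      Submodule.span A {algebraMap A K a, algebraMap A K b} := by
    simp [Ideal.span, Submodule.map_span, Set.image_pair]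
  have hone : (1 : K) ∈ Submodule.map (Algebra.linearMap A K) (Ideal.span {a, b}) * J :=
    hJ ▸ Submodule.one_le.mp le_rfl
  rw [hspan, Submodule.span_insert, Submodule.sup_mul, Submodule.mem_sup] at hone
  obtain ⟨_, haj, _, hbk, hsum⟩ := hone
  obtain ⟨j, hj, rfl⟩ := Submodule.mem_span_singleton_mul.mp haj
  obtain ⟨k, hk, rfl⟩ := Submodule.mem_span_singleton_mul.mp hbk
  have hintegral : ∀ c ∈ ({a, b} : Set A), ∀ j ∈ J,
      ∃ x : A, algebraMap A K x = algebraMap A K c * j := fun c hc j hj ↦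
    Submodule.mem_one.mp (hJ ▸ Submodule.mul_mem_mul
      (Submodule.mem_map_of_mem (Ideal.subset_span hc)) hj)
  obtain ⟨x, hx⟩ := hintegral a (by simp) j hj
  obtain ⟨y, hy⟩ := hintegral b (by simp) k hk
  have hxy : x + y = 1 := hinj (by simp [hx, hy, hsum])
  refine (isUnit_or_isUnit_of_add_one hxy).imp (fun hu ↦ ?_) (fun hu ↦ ?_)
  · exact isUnit_of_mul_isUnit_left (hx ▸ hu.map (algebraMap A K))
  · exact isUnit_of_mul_isUnit_left (hy ▸ hu.map (algebraMap A K))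

theorem IsPruferRing.add_notMem_nonZeroDivisors {A : Type*} [CommRing A] [IsLocalRing A]
    (h : IsPruferRing A) {a b : A} (ha : a ∉ A⁰) (hb : b ∉ A⁰) : a + b ∉ A⁰ := by
  intro hab
  obtain ⟨J, hJ⟩ := h (Ideal.span {a, b}) (Submodule.fg_span (Set.toFinite _))
    ⟨a + b, Ideal.add_mem _ (Ideal.subset_span (by simp)) (Ideal.subset_span (by simp)), hab⟩
  have hinj := IsFractionRing.injective A (FractionRing A)
  rcases IsLocalRing.isUnit_or_isUnit_algebraMap_of_map_span_pair_mul_eq_one hinj hJ with hu | hu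
  · exact ha (mem_nonZeroDivisors_of_injective hinj hu.mem_nonZeroDivisors)
  · exact hb (mem_nonZeroDivisors_of_injective hinj hu.mem_nonZeroDivisors)

theorem stmt6 {A : Type*} [CommRing A] [IsLocalRing A] (h : IsPruferRing A) :
    ∃ p : Ideal A, p.IsPrime ∧ ∀ a : A, a ∈ p ↔ a ∉ nonZeroDivisors A :=
  ⟨zeroDivisorsIdeal A h.add_notMem_nonZeroDivisors, zeroDivisorsIdeal_isPrime _,
    fun _ ↦ Iff.rfl⟩
end

section
/- Let f : A → C and g : B → C be ring homomorphisms whose kernels are regular ideals of A and B respectively. Then the fiber product A ×_C B = {(a,b) : f(a) = g(b)} is a Prüfer ring if and only if A and B are Prüfer rings and A ×_C B = A × B. -/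
/-
A Prüfer ring is one in which every finitely generated regular ideal `I` satisfies
`I * J = (d)` for some ideal `J` and some non-zero-divisor `d`; in this form the property
transfers along ring isomorphisms and holds for `A × B` iff it holds for `A` and `B`.
In the fiber product `R`, pick regular `a ∈ ker f`, `b ∈ ker g`; then `x = (a, 0)` and
`y = (0, b)` lie in `R`, `x y = 0` and `x + y` is regular. Writing `d = x p + y q` and
`x p = e d` yields `e y = 0` and `(1 - e) x = 0`, which forces `e = (1, 0)`. As `e ∈ R`,
`1 = f 1 = g 0 = 0` in `C`, so `C = 0` and `R = A × B`.
-/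

open nonZeroDivisors

lemma Ideal.map_algebraLinearMap_mul {R A : Type*} [CommRing R] [CommRing A] [Algebra R A]
    (I J : Ideal R) :
    Submodule.map (Algebra.linearMap R A) (I * J) =
      Submodule.map (Algebra.linearMap R A) I * Submodule.map (Algebra.linearMap R A) J :=
  Submodule.map_mul I J (Algebra.ofId R A)

section

variable {R S : Type*} [CommRing R] [CommRing S]

local notation "φ" => Algebra.linearMap R (FractionRing R)

lemma isPruferRing_iff : IsPruferRing R ↔ ∀ I : Ideal R, I.FG → (∃ r ∈ I, r ∈ R⁰) →
    ∃ (J : Ideal R) (d : R), d ∈ R⁰ ∧ I * J = Ideal.span {d} := by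
  refine forall₃_congr fun I _ hreg => ⟨?_, ?_⟩
  · rintro ⟨J, hJ⟩
    obtain ⟨r, hrI, hr⟩ := hreg
    set D := Submodule.map φ (Ideal.span {r})
    -- `r J ⊆ I J = R`, so `r` clears the denominators of `J`
    have hDJ : D * J ≤ LinearMap.range φ := by
      rw [← Submodule.one_eq_range, ← hJ]
      exact mul_le_mul_left (Submodule.map_mono (Ideal.span_singleton_le_iff_mem I |>.mpr hrI)) J
    refine ⟨Submodule.comap φ (D * J), r, hr, ?_⟩
    apply Submodule.map_injective_of_injective (f := φ) (IsFractionRing.injective R _)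
    rw [Ideal.map_algebraLinearMap_mul, Submodule.map_comap_eq, inf_eq_right.mpr hDJ,
      mul_left_comm, hJ, mul_one]
  · rintro ⟨J, d, hd, hIJ⟩
    have hu : IsUnit (algebraMap R (FractionRing R) d) := IsLocalization.map_units _ ⟨d, hd⟩
    refine ⟨Submodule.span R {(↑hu.unit⁻¹ : FractionRing R)} * Submodule.map φ J, ?_⟩
    rw [mul_left_comm, ← Ideal.map_algebraLinearMap_mul, hIJ, Submodule.map_span,
      Set.image_singleton, Submodule.span_mul_span, Set.singleton_mul_singleton,
      Algebra.linearMap_apply, IsUnit.val_inv_mul, Submodule.one_eq_span]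

lemma IsPruferRing.exists_mul_eq_zero_of_mul_eq_zero (h : IsPruferRing R) {x y : R}
    (hxy : x * y = 0) (hreg : x + y ∈ R⁰) : ∃ e, e * y = 0 ∧ (1 - e) * x = 0 := by
  rw [isPruferRing_iff] at h
  have hx : x ∈ Ideal.span {x, y} := Ideal.subset_span (by simp)
  have hy : y ∈ Ideal.span {x, y} := Ideal.subset_span (by simp)
  obtain ⟨J, d, hd, hIJ⟩ :=
    h (Ideal.span {x, y}) (Submodule.fg_span (Set.toFinite _)) ⟨x + y, add_mem hx hy, hreg⟩
  have hd_mem : d ∈ Ideal.span {x} * J ⊔ Ideal.span {y} * J := by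
    rw [← Ideal.sup_mul, ← Ideal.span_insert, hIJ]
    exact Ideal.mem_span_singleton_self d
  obtain ⟨_, hp, _, hq, hpq⟩ := Submodule.mem_sup.mp hd_mem
  obtain ⟨p, hpJ, rfl⟩ := Ideal.mem_span_singleton_mul.mp hp
  obtain ⟨q, -, rfl⟩ := Ideal.mem_span_singleton_mul.mp hq
  obtain ⟨e, he⟩ := Ideal.mem_span_singleton'.mp (hIJ ▸ Ideal.mul_mem_mul hx hpJ)
  refine ⟨e, mem_nonZeroDivisors_iff_right.mp hd _ ?_, mem_nonZeroDivisors_iff_right.mp hd _ ?_⟩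
  · linear_combination y * he + p * hxy
  · linear_combination -x * hpq - x * he + q * hxy

lemma RingEquiv.map_mem_nonZeroDivisors (e : R ≃+* S) {r : R} (hr : r ∈ R⁰) : e r ∈ S⁰ :=
  mem_nonZeroDivisors_of_injective (f := e.symm) e.symm.injective (by rwa [e.symm_apply_apply])

lemma IsPruferRing.of_ringEquiv (e : R ≃+* S) (h : IsPruferRing R) : IsPruferRing S := by
  rw [isPruferRing_iff] at h ⊢
  rintro I hfg ⟨r, hrI, hr⟩
  obtain ⟨J, d, hd, hIJ⟩ := h (I.map (e.symm : S →+* R)) (hfg.map _)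
    ⟨e.symm r, Ideal.mem_map_of_mem _ hrI, e.symm.map_mem_nonZeroDivisors hr⟩
  refine ⟨J.map (e : R →+* S), e d, e.map_mem_nonZeroDivisors hd, ?_⟩
  have := congrArg (Ideal.map (e : R →+* S)) hIJ
  rwa [Ideal.map_mul, Ideal.map_map, RingEquiv.comp_symm, Ideal.map_id,
    Ideal.map_span, Set.image_singleton] at this

end

lemma Prod.mk_mem_nonZeroDivisors_iff {A B : Type*} [CommRing A] [CommRing B] {a : A} {b : B} :
    (a, b) ∈ (A × B)⁰ ↔ a ∈ A⁰ ∧ b ∈ B⁰ := by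
  simp only [mem_nonZeroDivisors_iff_right, Prod.forall, Prod.mk_mul_mk, Prod.mk_eq_zero]
  exact ⟨fun h => ⟨fun x hx => (h x 0 ⟨hx, zero_mul b⟩).1,
      fun y hy => (h 0 y ⟨zero_mul a, hy⟩).2⟩,
    fun h x y hxy => ⟨h.1 x hxy.1, h.2 y hxy.2⟩⟩

namespace Ideal

variable {A B : Type*} [CommRing A] [CommRing B]

lemma FG.prod {I : Ideal A} {J : Ideal B} (hI : I.FG) (hJ : J.FG) : (I.prod J).FG := by
  obtain ⟨s, rfl⟩ := hI
  obtain ⟨t, rfl⟩ := hJ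
  classical
  refine ⟨(insert 0 s) ×ˢ (insert 0 t), ?_⟩
  rw [Finset.coe_product, Finset.coe_insert, Finset.coe_insert,
    span_prod (by simp), span_insert_zero, span_insert_zero]

lemma prod_mul_prod (I I' : Ideal A) (J J' : Ideal B) :
    I.prod J * I'.prod J' = (I * I').prod (J * J') := by
  rw [ideal_prod_eq (I.prod J * I'.prod J'), Ideal.map_mul, Ideal.map_mul, map_fst_prod,
    map_fst_prod, map_snd_prod, map_snd_prod]

lemma span_singleton_prod (a : A) (b : B) :
    span {(a, b)} = (span {a}).prod (span {b}) := by
  rw [← span_prod (by simp), Set.singleton_prod_singleton]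

end Ideal

section

variable {A B : Type*} [CommRing A] [CommRing B]

lemma IsPruferRing.of_prod_left (h : IsPruferRing (A × B)) : IsPruferRing A := by
  rw [isPruferRing_iff] at h ⊢
  rintro I hfg ⟨r, hrI, hr⟩
  obtain ⟨J, ⟨d₁, d₂⟩, hd, hIJ⟩ := h (I.prod ⊤) (hfg.prod (Ideal.fg_top B))
    ⟨(r, 1), (Ideal.mem_prod _ _).mpr ⟨hrI, trivial⟩,
      Prod.mk_mem_nonZeroDivisors_iff.mpr ⟨hr, one_mem _⟩⟩
  refine ⟨J.map (RingHom.fst A B), d₁, (Prod.mk_mem_nonZeroDivisors_iff.mp hd).1, ?_⟩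
  simpa [Ideal.map_mul, Ideal.map_span] using congrArg (Ideal.map (RingHom.fst A B)) hIJ

lemma isPruferRing_prod_iff : IsPruferRing (A × B) ↔ IsPruferRing A ∧ IsPruferRing B := by
  refine ⟨fun h => ⟨h.of_prod_left, (h.of_ringEquiv RingEquiv.prodComm).of_prod_left⟩, ?_⟩
  rintro ⟨hA, hB⟩
  rw [isPruferRing_iff] at hA hB ⊢
  rintro K hfg ⟨r, hrK, hr⟩
  rw [← Prod.mk.eta (p := r), Prod.mk_mem_nonZeroDivisors_iff] at hr
  obtain ⟨JA, dA, hdA, hJA⟩ := hA (K.map (RingHom.fst A B)) (hfg.map _)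
    ⟨r.1, Ideal.mem_map_of_mem _ hrK, hr.1⟩
  obtain ⟨JB, dB, hdB, hJB⟩ := hB (K.map (RingHom.snd A B)) (hfg.map _)
    ⟨r.2, Ideal.mem_map_of_mem _ hrK, hr.2⟩
  refine ⟨JA.prod JB, (dA, dB), Prod.mk_mem_nonZeroDivisors_iff.mpr ⟨hdA, hdB⟩, ?_⟩
  rw [Ideal.ideal_prod_eq K, Ideal.prod_mul_prod, hJA, hJB, Ideal.span_singleton_prod]

end

lemma subsingleton_of_isPruferRing_eqLocus {A B C : Type*}
    [CommRing A] [CommRing B] [CommRing C] {f : A →+* C} {g : B →+* C} {a : A} {b : B}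
    (ha : f a = 0) (hb : g b = 0) (ha₀ : a ∈ A⁰) (hb₀ : b ∈ B⁰)
    (hP : IsPruferRing (RingHom.eqLocus (f.comp (RingHom.fst A B)) (g.comp (RingHom.snd A B)))) :
    Subsingleton C := by
  set R := RingHom.eqLocus (f.comp (RingHom.fst A B)) (g.comp (RingHom.snd A B))
  let x : R := ⟨(a, 0), show f a = g 0 by rw [ha, map_zero]⟩
  let y : R := ⟨(0, b), show f 0 = g b by rw [hb, map_zero]⟩
  have hxy : x * y = 0 := Subtype.ext (by simp [x, y])
  have hreg : x + y ∈ R⁰ := mem_nonZeroDivisors_of_injective (f := R.subtype)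
    Subtype.val_injective
    (by simpa [x, y] using Prod.mk_mem_nonZeroDivisors_iff.mpr ⟨ha₀, hb₀⟩)
  obtain ⟨e, he, he'⟩ := hP.exists_mul_eq_zero_of_mul_eq_zero hxy hreg
  have he₂ : (e : A × B).2 = 0 := mem_nonZeroDivisors_iff_right.mp hb₀ _
    (by simpa [y] using congrArg (fun z : R => (z : A × B).2) he)
  have he₁ : (e : A × B).1 = 1 := (sub_eq_zero.mp (mem_nonZeroDivisors_iff_right.mp ha₀ _
    (by simpa [x] using congrArg (fun z : R => (z : A × B).1) he'))).symm
  have hfg : f (e : A × B).1 = g (e : A × B).2 := e.2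
  rw [he₁, he₂, map_one, map_zero] at hfg
  exact subsingleton_of_zero_eq_one hfg.symm

theorem stmt13 {A B C : Type*} [CommRing A] [CommRing B] [CommRing C]
    (f : A →+* C) (g : B →+* C)
    (hf : ∃ a ∈ RingHom.ker f, a ∈ nonZeroDivisors A)
    (hg : ∃ b ∈ RingHom.ker g, b ∈ nonZeroDivisors B) :
    IsPruferRing (RingHom.eqLocus (f.comp (RingHom.fst A B)) (g.comp (RingHom.snd A B))) ↔
      (IsPruferRing A ∧ IsPruferRing B ∧
        RingHom.eqLocus (f.comp (RingHom.fst A B)) (g.comp (RingHom.snd A B)) = ⊤) := by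
  set R := RingHom.eqLocus (f.comp (RingHom.fst A B)) (g.comp (RingHom.snd A B))
  have equiv_prod (htop : R = ⊤) : R ≃+* A × B :=
    (RingEquiv.subringCongr htop).trans Subring.topEquiv
  constructor
  · intro hP
    obtain ⟨a, ha, ha₀⟩ := hf
    obtain ⟨b, hb, hb₀⟩ := hg
    have := subsingleton_of_isPruferRing_eqLocus ha hb ha₀ hb₀ hP
    have htop : R = ⊤ := eq_top_iff.mpr fun z _ => Subsingleton.elim (f z.1) (g z.2)
    obtain ⟨hA, hB⟩ := isPruferRing_prod_iff.mp (hP.of_ringEquiv (equiv_prod htop))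
    exact ⟨hA, hB, htop⟩
  · rintro ⟨hA, hB, htop⟩
    exact (isPruferRing_prod_iff.mpr ⟨hA, hB⟩).of_ringEquiv (equiv_prod htop).symm
end

section
/- Every regular homomorphic image of a Prüfer ring is a Prüfer ring: if f : A → B is a surjective ring homomorphism such that f⁻¹(Reg(B)) ⊆ Reg(A), and A is a Prüfer ring, then B is a Prüfer ring. -/
/-!
Lift a finitely generated regular ideal `I` of `B`, together with a regular element `f a ∈ I`, to a
finitely generated ideal `I'` of `A` containing `a`; `a` is regular because `f` is regular. Over
the total ring of fractions, `I'` being invertible with `a ∈ I'` amounts to an ideal equation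
`I' * K = (a)`. Pushing it forward along `f` gives `I * f(K) = (f a)`, and since `f a` is a unit
in the total ring of fractions of `B`, this makes `I` invertible there.
-/

namespace Submodule

variable {R S : Type*} [CommRing R] [CommRing S] [Algebra R S]

theorem map_linearMap_mul (P Q : Ideal R) :
    map (Algebra.linearMap R S) (P * Q) =
      map (Algebra.linearMap R S) P * map (Algebra.linearMap R S) Q :=
  Submodule.map_mul P Q (Algebra.ofId R S)

theorem map_linearMap_span_singleton (a : R) :
    map (Algebra.linearMap R S) (Ideal.span {a}) = span R {algebraMap R S a} := by
  rw [Ideal.span, map_span, Set.image_singleton, Algebra.linearMap_apply]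

theorem exists_mul_eq_span_singleton_of_map_mul_eq_one
    (hinj : Function.Injective (algebraMap R S)) {I : Ideal R} {a : R} (ha : a ∈ I)
    {J : Submodule R S} (hJ : map (Algebra.linearMap R S) I * J = 1) :
    ∃ K : Ideal R, I * K = Ideal.span {a} := by
  set ι := Algebra.linearMap R S
  -- `(a) J ⊆ I J = 1` lies in the image of `R`, so it is the image of an ideal of `R`.
  have h_le_range : span R {algebraMap R S a} * J ≤ LinearMap.range ι := by
    rw [← one_eq_range, ← hJ, ← map_linearMap_span_singleton]
    exact mul_le_mul_left (map_mono (Ideal.span_singleton_le_iff_mem I |>.mpr ha)) J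
  refine ⟨comap ι (span R {algebraMap R S a} * J), map_injective_of_injective (f := ι) hinj ?_⟩
  rw [map_linearMap_mul, map_comap_eq, inf_eq_right.mpr h_le_range,
    map_linearMap_span_singleton, mul_left_comm, hJ, mul_one]

theorem exists_map_mul_eq_one_of_mul_eq_span_singleton {I K : Ideal R} {a : R}
    (ha : IsUnit (algebraMap R S a)) (hK : I * K = Ideal.span {a}) :
    ∃ J : Submodule R S, map (Algebra.linearMap R S) I * J = 1 := by
  obtain ⟨u, hu⟩ := ha
  refine ⟨span R {(u⁻¹ : Sˣ).val} * map (Algebra.linearMap R S) K, ?_⟩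
  rw [mul_left_comm, ← map_linearMap_mul, hK, map_linearMap_span_singleton, ← hu,
    span_mul_span, Set.singleton_mul_singleton, Units.inv_mul, one_eq_span]

end Submodule

theorem Ideal.exists_fg_mem_map_eq_of_surjective {A B : Type*} [CommRing A] [CommRing B]
    {f : A →+* B} (hf : Function.Surjective f) {I : Ideal B} (hI : I.FG) {a : A}
    (ha : f a ∈ I) : ∃ I' : Ideal A, I'.FG ∧ a ∈ I' ∧ I'.map f = I := by
  obtain ⟨s, rfl⟩ := hI
  refine ⟨span (insert a (Function.surjInv hf '' s)),
    Submodule.fg_span ((s.finite_toSet.image _).insert a), subset_span (Set.mem_insert a _), ?_⟩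
  rw [map_span, Set.image_insert_eq, Set.image_image]
  simp only [Function.surjInv_eq hf, Set.image_id']
  rw [span_insert, sup_eq_right.mpr ((span_singleton_le_iff_mem _).mpr ha)]

theorem stmt15 {A B : Type*} [CommRing A] [CommRing B] (f : A →+* B)
    (hsurj : Function.Surjective f)
    (hreg : ∀ a : A, f a ∈ nonZeroDivisors B → a ∈ nonZeroDivisors A)
    (hA : IsPruferRing A) :
    IsPruferRing B := by
  intro I hI ⟨r, hrI, hr⟩
  obtain ⟨a, rfl⟩ := hsurj r
  obtain ⟨I', hI'fg, haI', hI'⟩ := Ideal.exists_fg_mem_map_eq_of_surjective hsurj hI hrI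
  obtain ⟨J', hJ'⟩ := hA I' hI'fg ⟨a, haI', hreg a hr⟩
  obtain ⟨K, hK⟩ := Submodule.exists_mul_eq_span_singleton_of_map_mul_eq_one
    (IsFractionRing.injective A (FractionRing A)) haI' hJ'
  refine Submodule.exists_map_mul_eq_one_of_mul_eq_span_singleton (K := K.map f)
    (IsLocalization.map_units (FractionRing B) ⟨f a, hr⟩) ?_
  rw [← hI', ← Ideal.map_mul, hK, Ideal.map_span, Set.image_singleton]
end

section
/- If A is a local Prüfer ring, then A/Z(A) is a Prüfer domain (equivalently, a valuation domain, since it is local). -/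
theorem Ideal.isPrime_of_forall_mem_iff_notMem_nonZeroDivisors {A : Type*} [CommRing A]
    [Nontrivial A] {p : Ideal A} (hp : ∀ a : A, a ∈ p ↔ a ∉ nonZeroDivisors A) : p.IsPrime := by
  refine Ideal.isPrime_iff.mpr
    ⟨fun h => (hp 1).mp (h ▸ Submodule.mem_top) (one_mem _), fun {a b} hab => ?_⟩
  simp only [hp] at hab ⊢
  by_contra! h
  exact hab (mul_mem h.1 h.2)

theorem Ideal.exists_fg_map_eq_of_surjective {A B : Type*} [CommRing A] [CommRing B]
    {f : A →+* B} (hf : Function.Surjective f) {J : Ideal B} (hJ : J.FG) :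
    ∃ I : Ideal A, I.FG ∧ I.map f = J := by
  obtain ⟨s, rfl⟩ := hJ
  refine ⟨Ideal.span (Function.surjInv hf '' s), Submodule.fg_span (s.finite_toSet.image _), ?_⟩
  rw [Ideal.map_span, Set.image_image]
  simp only [Function.surjInv_eq hf, Set.image_id']

theorem IsPruferRing.isPrincipal_of_finite_maximals {R : Type*} [CommRing R]
    (hR : IsPruferRing R) (hfin : {I : Ideal R | I.IsMaximal}.Finite) {I : Ideal R} (hfg : I.FG)
    (hreg : ∃ r ∈ I, r ∈ nonZeroDivisors R) : I.IsPrincipal := by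
  obtain ⟨J, hJ⟩ := hR I hfg hreg
  obtain ⟨r, hrI, hr⟩ := hreg
  have hfrac : IsFractional (nonZeroDivisors R) J := by
    refine ⟨r, hr, fun b hb => ?_⟩
    have : algebraMap R (FractionRing R) r * b ∈
        Submodule.map (Algebra.linearMap R (FractionRing R)) I * J :=
      Submodule.mul_mem_mul (Submodule.mem_map_of_mem hrI) hb
    rw [hJ] at this
    obtain ⟨y, hy⟩ := Submodule.mem_one.mp this
    exact ⟨y, by simpa [Algebra.smul_def] using hy⟩
  let J' : FractionalIdeal (nonZeroDivisors R) (FractionRing R) := ⟨J, hfrac⟩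
  refine Ideal.IsPrincipal.of_finite_maximals_of_isUnit hfin (IsUnit.of_mul_eq_one J' ?_)
  rw [← FractionalIdeal.coeToSubmodule_injective.eq_iff,
    FractionalIdeal.coe_mul, FractionalIdeal.coe_one, FractionalIdeal.coe_coeIdeal]
  exact hJ

theorem isPruferRing_of_forall_isPrincipal {R : Type*} [CommRing R]
    (h : ∀ I : Ideal R, I.FG → (∃ r ∈ I, r ∈ nonZeroDivisors R) → I.IsPrincipal) :
    IsPruferRing R := by
  intro I hfg hreg
  obtain ⟨a, rfl⟩ := h I hfg hreg
  obtain ⟨r, hr, hreg⟩ := hreg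
  obtain ⟨b, rfl⟩ := Ideal.mem_span_singleton'.mp hr
  have ha : a ∈ nonZeroDivisors R := (mul_mem_nonZeroDivisors.mp hreg).2
  obtain ⟨u, hu⟩ := IsLocalization.map_units (FractionRing R) (⟨a, ha⟩ : nonZeroDivisors R)
  refine ⟨Submodule.span R {(u⁻¹ : (FractionRing R)ˣ).1}, ?_⟩
  rw [Submodule.map_span, Set.image_singleton, Submodule.span_mul_span,
    Set.singleton_mul_singleton]
  simp [← hu, Submodule.one_eq_span]

theorem stmt16 {A : Type*} [CommRing A] [IsLocalRing A] (hA : IsPruferRing A)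
    (p : Ideal A) (hp : ∀ a : A, a ∈ p ↔ a ∉ nonZeroDivisors A) :
    IsDomain (A ⧸ p) ∧ IsPruferRing (A ⧸ p) := by
  have := Ideal.isPrime_of_forall_mem_iff_notMem_nonZeroDivisors hp
  have hfin : {I : Ideal A | I.IsMaximal}.Finite :=
    (Set.finite_singleton _).subset fun _ hm => IsLocalRing.eq_maximalIdeal hm
  refine ⟨Ideal.Quotient.isDomain p, isPruferRing_of_forall_isPrincipal ?_⟩
  rintro J hJ ⟨r, hrJ, hr⟩
  obtain ⟨I, hIfg, rfl⟩ := Ideal.exists_fg_map_eq_of_surjective Ideal.Quotient.mk_surjective hJ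
  obtain ⟨x, hxI, rfl⟩ := (Ideal.mem_map_iff_of_surjective _ Ideal.Quotient.mk_surjective).mp hrJ
  have hx : x ∈ nonZeroDivisors A := by
    by_contra h
    exact nonZeroDivisors.ne_zero hr (Ideal.Quotient.eq_zero_iff_mem.mpr ((hp x).mpr h))
  exact (hA.isPrincipal_of_finite_maximals hfin hIfg ⟨x, hxI, hx⟩).map_ringHom _
end

section
/- Let A be a local pre-Prüfer ring. If 𝔭 and 𝔮 are prime ideals of A with 𝔭 regular (containing a non-zero-divisor), then 𝔭 and 𝔮 are comparable (𝔭 ⊆ 𝔮 or 𝔮 ⊆ 𝔭). -/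
/-- A pre-Prüfer ring: every proper homomorphic image is a Prüfer ring. -/
def IsPrePruferRing (R : Type*) [CommRing R] : Prop :=
  ∀ I : Ideal R, I ≠ ⊥ → I ≠ ⊤ → IsPruferRing (R ⧸ I)

/-!
Suppose `a ∈ 𝔭 \ 𝔮` and `b ∈ 𝔮 \ 𝔭`, and let `r ∈ 𝔭` be regular. Then `r * b` is a nonzero
element of `𝔭 ∩ 𝔮`, so `A ⧸ (𝔭 ⊓ 𝔮)` is a local Prüfer ring. In it `a + b` is regular, because
it lies outside both primes, so the ideal `(a, b)` is invertible. In a local ring an invertible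
ideal `(x, y)` is generated by `x` or by `y`: from `1 = x u + y v` with `x u, y v` in the image
of the ring, one of `x u`, `y v` is a unit. Hence `a ∣ b` or `b ∣ a` modulo `𝔭 ⊓ 𝔮`, which puts
`b` in `𝔭` or `a` in `𝔮`.
-/

namespace Submodule

variable {R S : Type*} [CommRing R] [CommRing S] [Algebra R S]

theorem exists_mul_add_mul_eq_one_of_span_pair_mul_eq_one {x y : S} {J : Submodule R S}
    (h : span R {x, y} * J = 1) : ∃ u ∈ J, ∃ v ∈ J, x * u + y * v = 1 := by
  have h1 : (1 : S) ∈ span R {x, y} * J := h ▸ mem_one.mpr ⟨1, map_one _⟩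
  rw [span_insert, sup_mul, mem_sup] at h1
  obtain ⟨_, hxu, _, hyv, huv⟩ := h1
  obtain ⟨u, hu, rfl⟩ := mem_span_singleton_mul.mp hxu
  obtain ⟨v, hv, rfl⟩ := mem_span_singleton_mul.mp hyv
  exact ⟨u, hu, v, hv, huv⟩

theorem dvd_or_dvd_of_map_span_pair_mul_eq_one [IsLocalRing R] [FaithfulSMul R S] {x y : R}
    {J : Submodule R S} (h : map (Algebra.linearMap R S) (Ideal.span {x, y}) * J = 1) :
    x ∣ y ∨ y ∣ x := by
  have hinj := FaithfulSMul.algebraMap_injective R S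
  have mul_mem_range :
      ∀ w ∈ ({x, y} : Set R), ∀ j ∈ J, ∃ c, algebraMap R S c = algebraMap R S w * j :=
    fun w hw j hj ↦ mem_one.mp <| h ▸ mul_mem_mul (mem_map_of_mem (Ideal.subset_span hw)) hj
  rw [← Ideal.submodule_span_eq, map_span, Set.image_pair] at h
  obtain ⟨u, hu, v, hv, huv⟩ := exists_mul_add_mul_eq_one_of_span_pair_mul_eq_one h
  obtain ⟨α, hα⟩ := mul_mem_range x (by simp) u hu
  obtain ⟨β, hβ⟩ := mul_mem_range y (by simp) v hv
  obtain ⟨γ, hγ⟩ := mul_mem_range y (by simp) u hu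
  obtain ⟨δ, hδ⟩ := mul_mem_range x (by simp) v hv
  have hαβ : α + β = 1 := hinj (by simp only [map_add, hα, hβ, map_one]; exact huv)
  rcases IsLocalRing.isUnit_or_isUnit_of_add_one hαβ with hα_unit | hβ_unit
  · exact .inl <| hα_unit.dvd_mul_left.mp ⟨γ, hinj (by simp only [map_mul, hα, hγ]; ring)⟩
  · exact .inr <| hβ_unit.dvd_mul_left.mp ⟨δ, hinj (by simp only [map_mul, hβ, hδ]; ring)⟩

end Submodule

theorem IsPruferRing.dvd_or_dvd {R : Type*} [CommRing R] [IsLocalRing R] (hR : IsPruferRing R)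
    {x y t : R} (ht : t ∈ Ideal.span {x, y}) (ht_reg : t ∈ nonZeroDivisors R) :
    x ∣ y ∨ y ∣ x := by
  obtain ⟨J, hJ⟩ := hR _ (Submodule.fg_span (Set.toFinite _)) ⟨t, ht, ht_reg⟩
  exact Submodule.dvd_or_dvd_of_map_span_pair_mul_eq_one hJ

namespace Ideal

variable {R : Type*} [CommRing R]

theorem Quotient.mk_inf_mem_nonZeroDivisors {p q : Ideal R} [p.IsPrime] [q.IsPrime] {t : R}
    (htp : t ∉ p) (htq : t ∉ q) :
    Quotient.mk (p ⊓ q) t ∈ nonZeroDivisors (R ⧸ p ⊓ q) := by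
  refine mem_nonZeroDivisors_iff_right.mpr fun z hz ↦ ?_
  obtain ⟨z, rfl⟩ := Quotient.mk_surjective z
  rw [← map_mul, Quotient.eq_zero_iff_mem, mem_inf] at hz
  rw [Quotient.eq_zero_iff_mem, mem_inf]
  exact ⟨(‹p.IsPrime›.mem_or_mem hz.1).resolve_right htp,
    (‹q.IsPrime›.mem_or_mem hz.2).resolve_right htq⟩

theorem mem_of_mk_dvd_mk {I P : Ideal R} (hIP : I ≤ P) {a b : R}
    (h : Quotient.mk I a ∣ Quotient.mk I b) (ha : a ∈ P) : b ∈ P := by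
  have := map_dvd (Quotient.factor hIP) h
  rwa [Quotient.factor_mk, Quotient.factor_mk, Quotient.eq_zero_iff_mem.mpr ha, zero_dvd_iff,
    Quotient.eq_zero_iff_mem] at this

end Ideal

theorem stmt18 {A : Type*} [CommRing A] [IsLocalRing A] (hA : IsPrePruferRing A)
    (p q : Ideal A) (hp : p.IsPrime) (hq : q.IsPrime)
    (hreg : ∃ r ∈ p, r ∈ nonZeroDivisors A) :
    p ≤ q ∨ q ≤ p := by
  by_contra! h
  simp only [SetLike.not_le_iff_exists] at h
  obtain ⟨⟨a, hap, haq⟩, b, hbq, hbp⟩ := h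
  obtain ⟨r, hrp, hr⟩ := hreg
  have hne_bot : p ⊓ q ≠ ⊥ := fun hbot ↦ hbp <| by
    have hbr : b * r = 0 :=
      (Submodule.eq_bot_iff _).mp hbot _ ⟨p.mul_mem_left b hrp, q.mul_mem_right r hbq⟩
    exact (mul_right_mem_nonZeroDivisors_eq_zero_iff hr).mp hbr ▸ p.zero_mem
  have hne_top : p ⊓ q ≠ ⊤ := fun htop ↦ hp.ne_top (top_le_iff.mp (htop ▸ inf_le_left))
  have : Nontrivial (A ⧸ p ⊓ q) := Ideal.Quotient.nontrivial_iff.mpr hne_top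
  have : IsLocalRing (A ⧸ p ⊓ q) := .of_surjective' _ Ideal.Quotient.mk_surjective
  have hab_reg := Ideal.Quotient.mk_inf_mem_nonZeroDivisors (t := a + b)
    (fun h ↦ hbp ((p.add_mem_iff_right hap).mp h)) (fun h ↦ haq ((q.add_mem_iff_left hbq).mp h))
  rw [map_add] at hab_reg
  rcases (hA _ hne_bot hne_top).dvd_or_dvd (x := Ideal.Quotient.mk _ a)
      (y := Ideal.Quotient.mk _ b) (Ideal.mem_span_pair.mpr ⟨1, 1, by simp⟩) hab_reg
    with hdvd | hdvd
  · exact hbp (Ideal.mem_of_mk_dvd_mk inf_le_left hdvd hap)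
  · exact haq (Ideal.mem_of_mk_dvd_mk inf_le_right hdvd hbq)
end
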